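/- arXiv:2404.12162 — 5 statements merged into one kernel-verified Lean document; each statement's English description precedes it below -/
import Mathlib

section
/- Let X be a geodesic metric space and let γ be a geodesic segment that is r-quadrangle-contracting. Then any geodesic λ with diam(π_γ(λ)) > 4r+1 satisfies d(λ, γ) ≤ r; hence γ has (4r+1)-bounded geodesic image. -/
open Metric Set
open scoped ENNReal

/-- A geodesic segment in `X`, parametrized by arc length on `[0, len]`. -/
structure GeoSeg (X : Type*) [MetricSpace X] where
  len : ℝ
  len_nonneg : 0 ≤ len
  f : ℝ → X
  isom : ∀ u ∈ Set.Icc (0:ℝ) len, ∀ v ∈ Set.Icc (0:ℝ) len, dist (f u) (f v) = |u - v|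

namespace GeoSeg

variable {X : Type*} [MetricSpace X]

/-- The starting point of a geodesic segment. -/
def src (σ : GeoSeg X) : X := σ.f 0

/-- The endpoint of a geodesic segment. -/
def tgt (σ : GeoSeg X) : X := σ.f σ.len

/-- The image of a geodesic segment. -/
def im (σ : GeoSeg X) : Set X := σ.f '' Set.Icc 0 σ.len

/-- The midpoint of a geodesic segment. -/
noncomputable def mid (σ : GeoSeg X) : X := σ.f (σ.len / 2)

end GeoSeg

variable {X : Type*} [MetricSpace X]

/-- `σ` is a subsegment of `τ`. -/
def Subseg (σ τ : GeoSeg X) : Prop :=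
  ∃ a : ℝ, 0 ≤ a ∧ a + σ.len ≤ τ.len ∧ ∀ t ∈ Set.Icc (0:ℝ) σ.len, σ.f t = τ.f (a + t)

/-- `X` is a geodesic metric space: any two points are joined by a geodesic segment. -/
def GeodSpace (X : Type*) [MetricSpace X] : Prop :=
  ∀ x y : X, ∃ γ : GeoSeg X, γ.src = x ∧ γ.tgt = y

/-- The set of closest points of `x` on `A` (closest point projection). -/
def ProjSet (A : Set X) (x : X) : Set X :=
  {p | p ∈ A ∧ ∀ q ∈ A, dist x p ≤ dist x q}

/-- The image of the closest point projection of the set `B` onto `A`. -/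
def ProjImg (A B : Set X) : Set X := ⋃ x ∈ B, ProjSet A x

/-- The geodesic segment `σ` is `r`-thin: every geodesic quadrangle containing `σ` as a
subsegment of its first side has its other three sides meeting the closed `r`-ball
around the midpoint of `σ`. -/
def IsThin (r : ℝ) (σ : GeoSeg X) : Prop :=
  ∀ γ₁ γ₂ γ₃ γ₄ : GeoSeg X,
    γ₁.tgt = γ₂.src → γ₂.tgt = γ₃.src → γ₃.tgt = γ₄.src → γ₄.tgt = γ₁.src →
    Subseg σ γ₁ →
    ∃ p ∈ γ₂.im ∪ γ₃.im ∪ γ₄.im, dist p σ.mid ≤ r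

/-- The geodesic `γ` is `r`-quadrangle-contracting: every subsegment of length at least
`3r` is `r`-thin. -/
def QuadContracting (r : ℝ) (γ : GeoSeg X) : Prop :=
  ∀ σ : GeoSeg X, Subseg σ γ → 3 * r ≤ σ.len → IsThin r σ

/-- The set `A` has `D`-bounded geodesic image: every geodesic `λ` at distance at least
`D` from `A` has projection onto `A` of diameter at most `D`. -/
def HasBGI (A : Set X) (D : ℝ) : Prop :=
  ∀ lam : GeoSeg X, (∀ p ∈ lam.im, ∀ q ∈ A, D ≤ dist p q) →
    Metric.diam (ProjImg A lam.im) ≤ D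

/-- The set `A` is `C`-(strongly-)contracting. -/
def IsContractingSet (A : Set X) (C : ℝ) : Prop :=
  ∀ x : X, Metric.diam (ProjImg A (Metric.ball x (Metric.infDist x A))) ≤ C

/-- A `C`-quasi-geodesic on a set `s ⊆ ℝ`. -/
def IsQuasiGeodesicOn (C : ℝ) (f : ℝ → X) (s : Set ℝ) : Prop :=
  ContinuousOn f s ∧ ∀ u ∈ s, ∀ v ∈ s,
    |u - v| / C - C ≤ dist (f u) (f v) ∧ dist (f u) (f v) ≤ C * |u - v| + C

/-- A contraction gauge: a non-decreasing function `K : ℝ≥0 → ℝ≥0 ∪ {∞}` with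
`K r ≥ 4r + 1`. -/
structure ContractionGauge where
  K : ℝ → ℝ≥0∞
  mono : ∀ ⦃r s : ℝ⦄, 0 ≤ r → r ≤ s → K r ≤ K s
  lb : ∀ r : ℝ, 0 ≤ r → ENNReal.ofReal (4 * r + 1) ≤ K r

/-- A contraction gauge is full if it never takes the value `∞`. -/
def ContractionGauge.Full (K : ContractionGauge) : Prop := ∀ r : ℝ, K.K r ≠ ⊤

/-- The pair `(x, y)` is `K`-anti-contracting: `d(x,y) ≥ 1` and no subsegment of any
geodesic from `x` to `y` of length at least `K r` is `r`-thin, for any `r ≥ 0`. -/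
def AntiContracting (K : ContractionGauge) (x y : X) : Prop :=
  1 ≤ dist x y ∧ ∀ r : ℝ, 0 ≤ r → ∀ γ : GeoSeg X, γ.src = x → γ.tgt = y →
    ∀ σ : GeoSeg X, Subseg σ γ → K.K r ≤ ENNReal.ofReal σ.len → ¬ IsThin r σ

open Classical in
/-- Cost of a single step in a chain in the contraction space: anti-contracting pairs
are joined by an edge of length one. -/
noncomputable def stepCost (K : ContractionGauge) (a b : X) : ℝ :=
  if AntiContracting K a b then min (dist a b) 1 else dist a b

/-- Total cost of a chain of points. -/
noncomputable def chainCost (K : ContractionGauge) : List X → ℝ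
  | [] => 0
  | [_] => 0
  | a :: b :: l => stepCost K a b + chainCost K (b :: l)

/-- The path metric of the `K`-contraction space `X̂_K`, restricted to `X`
(which is `1/2`-dense in `X̂_K`). -/
noncomputable def hatDist (K : ContractionGauge) (x y : X) : ℝ :=
  sInf {c : ℝ | ∃ l : List X, l.head? = some x ∧ l.getLast? = some y ∧ c = chainCost K l}

/-- Four-point (Gromov) hyperbolicity for a distance function. -/
def FourPointHyp {α : Type*} (d : α → α → ℝ) (δ : ℝ) : Prop :=
  ∀ w x y z : α, d x z + d y w ≤ max (d x y + d z w) (d y z + d x w) + 2 * δ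

/-- The contraction gauge `K(r) = 10r + 1`, defining "the" contraction space `X̂`. -/
noncomputable def tenGauge : ContractionGauge where
  K r := ENNReal.ofReal (10 * r + 1)
  mono := by
    intro r s hr hrs
    exact ENNReal.ofReal_le_ofReal (by linarith)
  lb := by
    intro r hr
    exact ENNReal.ofReal_le_ofReal (by linarith)

section Aux

variable {X : Type*} [MetricSpace X]

/-- Restriction of a geodesic segment to `[a, b]`. -/
noncomputable def GeoSeg.restr (γ : GeoSeg X) (a b : ℝ) (h0 : 0 ≤ a) (hab : a ≤ b)
    (hb : b ≤ γ.len) : GeoSeg X where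
  len := b - a
  len_nonneg := by linarith
  f t := γ.f (a + t)
  isom := by
    intro u hu v hv
    have h := γ.isom (a + u) ⟨by linarith [hu.1], by linarith [hu.2]⟩
      (a + v) ⟨by linarith [hv.1], by linarith [hv.2]⟩
    rw [h, show a + u - (a + v) = u - v by ring]

/-- Reversal of a geodesic segment. -/
noncomputable def GeoSeg.rev (γ : GeoSeg X) : GeoSeg X where
  len := γ.len
  len_nonneg := γ.len_nonneg
  f t := γ.f (γ.len - t)
  isom := by
    intro u hu v hv
    have h := γ.isom (γ.len - u) ⟨by linarith [hu.2], by linarith [hu.1]⟩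
      (γ.len - v) ⟨by linarith [hv.2], by linarith [hv.1]⟩
    rw [h, show γ.len - u - (γ.len - v) = -(u - v) by ring, abs_neg]

lemma GeoSeg.restr_im (γ : GeoSeg X) (a b : ℝ) (h0 : 0 ≤ a) (hab : a ≤ b)
    (hb : b ≤ γ.len) : (γ.restr a b h0 hab hb).im ⊆ γ.im := by
  rintro p ⟨t, ht, rfl⟩
  have ht1 : 0 ≤ t := ht.1
  have ht2 : t ≤ b - a := ht.2
  exact ⟨a + t, ⟨by linarith, by linarith⟩, rfl⟩

lemma GeoSeg.rev_im (γ : GeoSeg X) : γ.rev.im ⊆ γ.im := by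
  rintro p ⟨t, ht, rfl⟩
  have ht1 : 0 ≤ t := ht.1
  have ht2 : t ≤ γ.len := ht.2
  exact ⟨γ.len - t, ⟨by linarith, by linarith⟩, rfl⟩

/-- For a point on a geodesic segment, the distances to the endpoints add up. -/
lemma GeoSeg.dist_add_of_mem (γ : GeoSeg X) {p : X} (hp : p ∈ γ.im) :
    dist γ.src p + dist p γ.tgt = dist γ.src γ.tgt := by
  obtain ⟨u, hu, rfl⟩ := hp
  have h0 : (0 : ℝ) ∈ Set.Icc 0 γ.len := ⟨le_refl _, γ.len_nonneg⟩
  have hl : γ.len ∈ Set.Icc 0 γ.len := ⟨γ.len_nonneg, le_refl _⟩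
  rw [GeoSeg.src, GeoSeg.tgt, γ.isom 0 h0 u hu, γ.isom u hu γ.len hl, γ.isom 0 h0 γ.len hl,
    abs_of_nonpos (by linarith [hu.1]), abs_of_nonpos (by linarith [hu.2]),
    abs_of_nonpos (by linarith [γ.len_nonneg])]
  ring

/-- Any two points on a geodesic segment are joined by a geodesic whose image lies
in the segment. -/
lemma GeoSeg.exists_join (γ : GeoSeg X) {x y : X} (hx : x ∈ γ.im) (hy : y ∈ γ.im) :
    ∃ τ : GeoSeg X, τ.src = x ∧ τ.tgt = y ∧ τ.im ⊆ γ.im := by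
  obtain ⟨u, hu, rfl⟩ := hx
  obtain ⟨v, hv, rfl⟩ := hy
  rcases le_total u v with h | h
  · refine ⟨γ.restr u v hu.1 h hv.2, ?_, ?_, γ.restr_im u v hu.1 h hv.2⟩
    · show γ.f (u + 0) = γ.f u; rw [add_zero]
    · show γ.f (u + (v - u)) = γ.f v; rw [add_sub_cancel]
  · refine ⟨(γ.restr v u hv.1 h hu.2).rev, ?_, ?_,
      fun p hp => γ.restr_im v u hv.1 h hu.2 ((γ.restr v u hv.1 h hu.2).rev_im hp)⟩
    · show γ.f (v + (u - v - 0)) = γ.f u; rw [show v + (u - v - 0) = u by ring]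
    · show γ.f (v + (u - v - (u - v))) = γ.f v; rw [show v + (u - v - (u - v)) = v by ring]

lemma key_step {X : Type*} [MetricSpace X] (hX : GeodSpace X) (r : ℝ) (hr : 0 ≤ r)
    (γ : GeoSeg X) (hγ : QuadContracting r γ) (lam : GeoSeg X)
    (x₁ x₂ : X) (hx₁ : x₁ ∈ lam.im) (hx₂ : x₂ ∈ lam.im)
    (t₁ t₂ : ℝ) (ht₁ : t₁ ∈ Set.Icc 0 γ.len) (ht₂ : t₂ ∈ Set.Icc 0 γ.len)
    (hq₁ : γ.f t₁ ∈ ProjSet γ.im x₁) (hq₂ : γ.f t₂ ∈ ProjSet γ.im x₂)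
    (hsep : 4 * r + 1 < t₂ - t₁) :
    ∃ p ∈ lam.im, ∃ q ∈ γ.im, dist p q ≤ r := by
  set m : ℝ := (t₁ + t₂) / 2 with hm
  set a : ℝ := m - 3 * r / 2 with ha
  set b : ℝ := m + 3 * r / 2 with hb
  have hta : t₁ ≤ a := by rw [ha, hm]; linarith
  have hbt : b ≤ t₂ := by rw [hb, hm]; linarith
  have h0a : 0 ≤ a := le_trans ht₁.1 hta
  have hab : a ≤ b := by rw [ha, hb]; linarith
  have hbl : b ≤ γ.len := le_trans hbt ht₂.2
  have ht12 : t₁ ≤ t₂ := by linarith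
  have hmmem : m ∈ Set.Icc 0 γ.len :=
    ⟨le_trans ht₁.1 (by rw [hm]; linarith), le_trans (by rw [hm]; linarith) ht₂.2⟩
  have hmem : γ.f m ∈ γ.im := ⟨m, hmmem, rfl⟩
  set σ : GeoSeg X := γ.restr a b h0a hab hbl with hσ
  have hsub : Subseg σ γ := ⟨a, h0a, by show a + (b - a) ≤ γ.len; linarith, fun t _ => rfl⟩
  have hlen : 3 * r ≤ σ.len := by show 3 * r ≤ b - a; rw [ha, hb]; linarith
  have hthin : IsThin r σ := hγ σ hsub hlen
  -- the quadrangle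
  set γ₁ : GeoSeg X := γ.restr t₁ t₂ ht₁.1 ht12 ht₂.2 with hγ₁
  obtain ⟨γ₂, h2s, h2t⟩ := hX (γ.f t₂) x₂
  obtain ⟨γ₃, h3s, h3t, h3im⟩ := lam.exists_join hx₂ hx₁
  obtain ⟨γ₄, h4s, h4t⟩ := hX x₁ (γ.f t₁)
  have e12 : γ₁.tgt = γ₂.src := by
    rw [h2s]; show γ.f (t₁ + (t₂ - t₁)) = γ.f t₂; rw [add_sub_cancel]
  have e23 : γ₂.tgt = γ₃.src := by rw [h2t, h3s]
  have e34 : γ₃.tgt = γ₄.src := by rw [h3t, h4s]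
  have e41 : γ₄.tgt = γ₁.src := by
    rw [h4t]; show γ.f t₁ = γ.f (t₁ + 0); rw [add_zero]
  have hsub1 : Subseg σ γ₁ := by
    refine ⟨a - t₁, by linarith, by show a - t₁ + (b - a) ≤ t₂ - t₁; linarith, fun t _ => ?_⟩
    show γ.f (a + t) = γ.f (t₁ + (a - t₁ + t)); rw [show t₁ + (a - t₁ + t) = a + t by ring]
  obtain ⟨p, hp, hpd⟩ := hthin γ₁ γ₂ γ₃ γ₄ e12 e23 e34 e41 hsub1
  have hmid : σ.mid = γ.f m := by
    show γ.f (a + (b - a) / 2) = γ.f m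
    rw [show a + (b - a) / 2 = m by rw [ha, hb]; ring]
  rw [hmid] at hpd
  rcases hp with (hp2 | hp3) | hp4
  · exfalso
    have hsum := γ₂.dist_add_of_mem hp2
    rw [h2s, h2t] at hsum
    have hproj := hq₂.2 (γ.f m) hmem
    have h1 : dist x₂ (γ.f m) ≤ dist x₂ p + dist p (γ.f m) := dist_triangle _ _ _
    have h2 : dist (γ.f t₂) (γ.f m) ≤ dist (γ.f t₂) p + dist p (γ.f m) := dist_triangle _ _ _
    have h3 : dist (γ.f t₂) (γ.f m) = t₂ - m := by
      rw [γ.isom t₂ ht₂ m hmmem, abs_of_nonneg (by rw [hm]; linarith)]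
    have hc1 := dist_comm x₂ p
    have hc2 := dist_comm x₂ (γ.f t₂)
    have hmval : t₂ - m = (t₂ - t₁) / 2 := by rw [hm]; ring
    linarith
  · exact ⟨p, h3im hp3, γ.f m, hmem, hpd⟩
  · exfalso
    have hsum := γ₄.dist_add_of_mem hp4
    rw [h4s, h4t] at hsum
    have hproj := hq₁.2 (γ.f m) hmem
    have h1 : dist x₁ (γ.f m) ≤ dist x₁ p + dist p (γ.f m) := dist_triangle _ _ _
    have h2 : dist (γ.f t₁) (γ.f m) ≤ dist (γ.f t₁) p + dist p (γ.f m) := dist_triangle _ _ _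
    have h3 : dist (γ.f t₁) (γ.f m) = m - t₁ := by
      rw [γ.isom t₁ ht₁ m hmmem, abs_of_nonpos (by rw [hm]; linarith)]
      rw [hm]; ring
    have hc1 := dist_comm (γ.f t₁) p
    have hmval : m - t₁ = (t₂ - t₁) / 2 := by rw [hm]; ring
    linarith

end Aux

/-- If a geodesic segment `γ` is `r`-quadrangle-contracting, then any
geodesic `λ` with `diam (π_γ λ) > 4r + 1` satisfies `d(λ, γ) ≤ r`; hence `γ` has
`(4r+1)`-bounded geodesic image. -/
theorem quadContracting_implies_bgi
    {X : Type*} [MetricSpace X] (hX : GeodSpace X) (r : ℝ) (hr : 0 ≤ r)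
    (γ : GeoSeg X) (hγ : QuadContracting r γ) :
    (∀ lam : GeoSeg X, 4 * r + 1 < Metric.diam (ProjImg γ.im lam.im) →
      ∃ p ∈ lam.im, ∃ q ∈ γ.im, dist p q ≤ r) ∧
    HasBGI γ.im (4 * r + 1) := by
  have main : ∀ lam : GeoSeg X, 4 * r + 1 < Metric.diam (ProjImg γ.im lam.im) →
      ∃ p ∈ lam.im, ∃ q ∈ γ.im, dist p q ≤ r := by
    intro lam hdiam
    have hpts : ∃ q₁ ∈ ProjImg γ.im lam.im, ∃ q₂ ∈ ProjImg γ.im lam.im,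
        4 * r + 1 < dist q₁ q₂ := by
      by_contra h
      push_neg at h
      exact absurd (Metric.diam_le_of_forall_dist_le (by linarith) h) (not_le.2 hdiam)
    obtain ⟨q₁, hq₁, q₂, hq₂, hd⟩ := hpts
    rw [ProjImg] at hq₁ hq₂
    simp only [Set.mem_iUnion, exists_prop] at hq₁ hq₂
    obtain ⟨x₁, hx₁, hq₁⟩ := hq₁
    obtain ⟨x₂, hx₂, hq₂⟩ := hq₂
    obtain ⟨t₁, ht₁, hft₁⟩ := hq₁.1
    obtain ⟨t₂, ht₂, hft₂⟩ := hq₂.1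
    subst hft₁; subst hft₂
    have hdist : dist (γ.f t₁) (γ.f t₂) = |t₁ - t₂| := γ.isom t₁ ht₁ t₂ ht₂
    rcases le_total t₁ t₂ with h | h
    · have hsep : 4 * r + 1 < t₂ - t₁ := by
        rw [hdist, abs_of_nonpos (by linarith)] at hd; linarith
      exact key_step hX r hr γ hγ lam x₁ x₂ hx₁ hx₂ t₁ t₂ ht₁ ht₂ hq₁ hq₂ hsep
    · have hsep : 4 * r + 1 < t₁ - t₂ := by
        rw [hdist, abs_of_nonneg (by linarith)] at hd; linarith
      exact key_step hX r hr γ hγ lam x₂ x₁ hx₂ hx₁ t₂ t₁ ht₂ ht₁ hq₂ hq₁ hsep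
  refine ⟨main, ?_⟩
  intro lam hfar
  by_contra h
  push_neg at h
  obtain ⟨p, hp, q, hq, hpq⟩ := main lam h
  have := hfar p hp q hq
  linarith
end

section
/- Let X be a geodesic metric space and let γ be a geodesic with the C'-bounded geodesic image property whose subsegments all have C'-bounded geodesic image. Then every subsegment γ' of γ of length at least 3C'+1 is (4C'+1)-thin. Consequently, a geodesic all of whose subsegments have C'-bounded geodesic image is (4C'+1)-quadrangle-contracting (up to the length threshold 3C'+1). -/
open Metric Set
open scoped ENNReal

variable {X : Type*} [MetricSpace X]

section AuxBGI

variable {X : Type*} [MetricSpace X]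

private lemma subseg_trans' {σ τ ρ : GeoSeg X} (h1 : Subseg σ τ) (h2 : Subseg τ ρ) :
    Subseg σ ρ := by
  obtain ⟨a, ha0, haL, haf⟩ := h1
  obtain ⟨b, hb0, hbL, hbf⟩ := h2
  refine ⟨b + a, by linarith, by linarith, fun t ht => ?_⟩
  have ht' : a + t ∈ Set.Icc (0:ℝ) τ.len := ⟨by linarith [ht.1], by linarith [ht.2]⟩
  rw [haf t ht, hbf _ ht']
  ring_nf

private lemma geoseg_im_isCompact (τ : GeoSeg X) : IsCompact τ.im := by
  have hcont : ContinuousOn τ.f (Set.Icc 0 τ.len) :=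
    (LipschitzOnWith.of_dist_le_mul (K := 1) (fun u hu v hv => by
      rw [τ.isom u hu v hv]; simp [Real.dist_eq])).continuousOn
  exact isCompact_Icc.image_of_continuousOn hcont

private lemma geoseg_projset_nonempty (τ : GeoSeg X) (x : X) :
    (ProjSet τ.im x).Nonempty := by
  have hne : τ.im.Nonempty := ⟨τ.f 0, 0, ⟨le_refl 0, τ.len_nonneg⟩, rfl⟩
  obtain ⟨y, hy, hyd⟩ := (geoseg_im_isCompact τ).exists_infDist_eq_dist hne x
  exact ⟨y, hy, fun q hq => by rw [← hyd]; exact Metric.infDist_le_dist_of_mem hq⟩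

private lemma geoseg_src_mem (τ : GeoSeg X) : τ.src ∈ τ.im :=
  ⟨0, ⟨le_refl _, τ.len_nonneg⟩, rfl⟩

private lemma geoseg_tgt_mem (τ : GeoSeg X) : τ.tgt ∈ τ.im :=
  ⟨τ.len, ⟨τ.len_nonneg, le_refl _⟩, rfl⟩

end AuxBGI

/-- If every subsegment of a geodesic `γ` has the `C'`-bounded geodesic
image property, then every subsegment of `γ` of length at least `3C' + 1` is
`(4C'+1)`-thin. -/
theorem bgi_implies_thin_subsegments
    {X : Type*} [MetricSpace X] (hX : GeodSpace X) (C' : ℝ) (hC' : 0 ≤ C')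
    (γ : GeoSeg X)
    (hsub : ∀ σ : GeoSeg X, Subseg σ γ → HasBGI σ.im C') :
    ∀ σ : GeoSeg X, Subseg σ γ → 3 * C' + 1 ≤ σ.len → IsThin (4 * C' + 1) σ := by
  intro σ hσγ hlen
  intro γ₁ γ₂ γ₃ γ₄ h12 h23 h34 h41 hσ1
  by_contra hcon
  push_neg at hcon
  have hL0 : 0 ≤ σ.len := σ.len_nonneg
  set ℓ : ℝ := 3 * C' + 1 with hℓ
  have hℓpos : 0 < ℓ := by rw [hℓ]; linarith
  set s₀ : ℝ := σ.len / 2 - ℓ / 2 with hs₀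
  have hs₀0 : 0 ≤ s₀ := by rw [hs₀]; linarith
  have hmem : ∀ t ∈ Set.Icc (0:ℝ) ℓ, s₀ + t ∈ Set.Icc (0:ℝ) σ.len := fun t ht =>
    ⟨by linarith [ht.1], by rw [hs₀]; linarith [ht.2]⟩
  set σ' : GeoSeg X :=
    { len := ℓ
      len_nonneg := le_of_lt hℓpos
      f := fun t => σ.f (s₀ + t)
      isom := fun u hu v hv => by
        show dist (σ.f (s₀ + u)) (σ.f (s₀ + v)) = |u - v|
        rw [σ.isom _ (hmem u hu) _ (hmem v hv)]
        congr 1; ring } with hσ'def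
  have hσ'len : σ'.len = ℓ := rfl
  -- σ' is a subsegment of σ, hence of γ, hence has BGI
  have hσ'σ : Subseg σ' σ :=
    ⟨s₀, hs₀0, by rw [hσ'len, hs₀]; linarith, fun t ht => rfl⟩
  have hBGI : HasBGI σ'.im C' := hsub σ' (subseg_trans' hσ'σ hσγ)
  obtain ⟨a, ha0, haL, haf⟩ := hσ1
  -- σ' inside γ₁
  have hf' : ∀ t ∈ Set.Icc (0:ℝ) ℓ, σ'.f t = γ₁.f (a + s₀ + t) := by
    intro t ht
    show σ.f (s₀ + t) = γ₁.f (a + s₀ + t)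
    rw [haf _ (hmem t ht)]
    congr 1; ring
  have hin : ∀ u ∈ Set.Icc (0:ℝ) ℓ, a + s₀ + u ∈ Set.Icc (0:ℝ) γ₁.len := by
    intro u hu
    have := hmem u hu
    exact ⟨by linarith [this.1], by linarith [this.2]⟩
  have hγ₁len : γ₁.len ∈ Set.Icc (0:ℝ) γ₁.len := ⟨γ₁.len_nonneg, le_refl _⟩
  have hγ₁0 : (0:ℝ) ∈ Set.Icc (0:ℝ) γ₁.len := ⟨le_refl _, γ₁.len_nonneg⟩
  have hℓmem : ℓ ∈ Set.Icc (0:ℝ) ℓ := ⟨le_of_lt hℓpos, le_refl _⟩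
  have h0mem : (0:ℝ) ∈ Set.Icc (0:ℝ) ℓ := ⟨le_refl _, le_of_lt hℓpos⟩
  -- the endpoint of σ' is a projection of γ₁.tgt
  have hq₂ : σ'.tgt ∈ ProjSet σ'.im γ₁.tgt := by
    refine ⟨geoseg_tgt_mem σ', fun q hq => ?_⟩
    obtain ⟨u, hu, rfl⟩ := hq
    have hu' : u ∈ Set.Icc (0:ℝ) ℓ := hu
    show dist (γ₁.f γ₁.len) (σ'.f σ'.len) ≤ dist (γ₁.f γ₁.len) (σ'.f u)
    rw [hf' _ hu', hf' σ'.len hℓmem, γ₁.isom _ hγ₁len _ (hin _ hℓmem),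
      γ₁.isom _ hγ₁len _ (hin _ hu')]
    rw [abs_of_nonneg (by linarith [(hin _ hℓmem).2]),
      abs_of_nonneg (by linarith [(hin _ hu').2])]
    linarith [hu'.2]
  -- the start of σ' is a projection of γ₁.src
  have hq₁ : σ'.src ∈ ProjSet σ'.im γ₁.src := by
    refine ⟨geoseg_src_mem σ', fun q hq => ?_⟩
    obtain ⟨u, hu, rfl⟩ := hq
    have hu' : u ∈ Set.Icc (0:ℝ) ℓ := hu
    show dist (γ₁.f 0) (σ'.f 0) ≤ dist (γ₁.f 0) (σ'.f u)
    rw [hf' _ hu', hf' 0 h0mem, γ₁.isom _ hγ₁0 _ (hin _ h0mem),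
      γ₁.isom _ hγ₁0 _ (hin _ hu')]
    rw [abs_of_nonpos (by linarith [(hin _ h0mem).1]),
      abs_of_nonpos (by linarith [(hin _ hu').1])]
    linarith [hu'.1]
  -- points of σ' are close to the midpoint of σ
  have hmid : ∀ q ∈ σ'.im, dist q σ.mid ≤ ℓ / 2 := by
    intro q hq
    obtain ⟨u, hu, rfl⟩ := hq
    have hu' : u ∈ Set.Icc (0:ℝ) ℓ := hu
    have hmidmem : σ.len / 2 ∈ Set.Icc (0:ℝ) σ.len := ⟨by linarith, by linarith⟩
    show dist (σ.f (s₀ + u)) (σ.f (σ.len / 2)) ≤ ℓ / 2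
    rw [σ.isom _ (hmem u hu') _ hmidmem]
    have he : s₀ + u - σ.len / 2 = u - ℓ / 2 := by rw [hs₀]; ring
    rw [he, abs_le]
    constructor <;> linarith [hu'.1, hu'.2]
  -- the three other sides stay far from σ'
  have hfar : ∀ lam : GeoSeg X, lam.im ⊆ γ₂.im ∪ γ₃.im ∪ γ₄.im →
      ∀ p ∈ lam.im, ∀ q ∈ σ'.im, C' ≤ dist p q := by
    intro lam hlam p hp q hq
    have h1 := hcon p (hlam hp)
    have h2 := hmid q hq
    have h3 := dist_triangle p q σ.mid
    have hℓ' : ℓ = 3 * C' + 1 := hℓ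
    linarith
  have hd2 : Metric.diam (ProjImg σ'.im γ₂.im) ≤ C' :=
    hBGI γ₂ (hfar γ₂ fun x hx => Or.inl (Or.inl hx))
  have hd3 : Metric.diam (ProjImg σ'.im γ₃.im) ≤ C' :=
    hBGI γ₃ (hfar γ₃ fun x hx => Or.inl (Or.inr hx))
  have hd4 : Metric.diam (ProjImg σ'.im γ₄.im) ≤ C' :=
    hBGI γ₄ (hfar γ₄ fun x hx => Or.inr hx)
  -- boundedness of projection images
  have hPsub : ∀ B : Set X, ProjImg σ'.im B ⊆ σ'.im := by
    intro B x hx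
    simp only [ProjImg, Set.mem_iUnion] at hx
    obtain ⟨y, _, hx⟩ := hx
    exact hx.1
  have hbdd : ∀ B : Set X, Bornology.IsBounded (ProjImg σ'.im B) := fun B =>
    (geoseg_im_isCompact σ').isBounded.subset (hPsub B)
  -- choose projections of the corners
  obtain ⟨q₃, hq₃⟩ := geoseg_projset_nonempty σ' γ₂.tgt
  obtain ⟨q₄, hq₄⟩ := geoseg_projset_nonempty σ' γ₃.tgt
  -- chain the diameter bounds
  have m2a : σ'.tgt ∈ ProjImg σ'.im γ₂.im :=
    Set.mem_biUnion (geoseg_src_mem γ₂) (h12 ▸ hq₂)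
  have m2b : q₃ ∈ ProjImg σ'.im γ₂.im :=
    Set.mem_biUnion (geoseg_tgt_mem γ₂) hq₃
  have m3a : q₃ ∈ ProjImg σ'.im γ₃.im :=
    Set.mem_biUnion (geoseg_src_mem γ₃) (h23 ▸ hq₃)
  have m3b : q₄ ∈ ProjImg σ'.im γ₃.im :=
    Set.mem_biUnion (geoseg_tgt_mem γ₃) hq₄
  have m4a : q₄ ∈ ProjImg σ'.im γ₄.im :=
    Set.mem_biUnion (geoseg_src_mem γ₄) (h34 ▸ hq₄)
  have m4b : σ'.src ∈ ProjImg σ'.im γ₄.im :=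
    Set.mem_biUnion (geoseg_tgt_mem γ₄) (h41 ▸ hq₁)
  have d1 : dist σ'.tgt q₃ ≤ C' :=
    (Metric.dist_le_diam_of_mem (hbdd γ₂.im) m2a m2b).trans hd2
  have d2 : dist q₃ q₄ ≤ C' :=
    (Metric.dist_le_diam_of_mem (hbdd γ₃.im) m3a m3b).trans hd3
  have d3 : dist q₄ σ'.src ≤ C' :=
    (Metric.dist_le_diam_of_mem (hbdd γ₄.im) m4a m4b).trans hd4
  have htri := dist_triangle4 σ'.tgt q₃ q₄ σ'.src
  have hlen' : dist σ'.tgt σ'.src = ℓ := by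
    show dist (σ'.f σ'.len) (σ'.f 0) = ℓ
    rw [σ'.isom _ ⟨σ'.len_nonneg, le_refl _⟩ _ ⟨le_refl _, σ'.len_nonneg⟩, hσ'len]
    simp [abs_of_nonneg (le_of_lt hℓpos)]
  rw [hlen'] at htri
  have hℓ' : ℓ = 3 * C' + 1 := hℓ
  linarith
end

section
/- Let X be a geodesic metric space, K a contraction gauge, and X̂_K the K-contraction space with metric d̂. Let (γ, γ', γ'') be a geodesic triangle in X (with respect to d). Then every point p on γ satisfies d̂(p, q) ≤ 1 where q is a point of γ' ∪ γ'' closest to p with respect to d; in particular, γ is contained in the closed 1-neighbourhood of γ' ∪ γ'' with respect to d̂. -/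
open Metric Set
open scoped ENNReal

variable {X : Type*} [MetricSpace X]

namespace GeoSeg

variable {X : Type*} [MetricSpace X]

/-- Restriction of a geodesic segment to a subinterval `[a, b]`. -/
def restrict (γ : GeoSeg X) (a b : ℝ) (h0 : 0 ≤ a) (hab : a ≤ b) (hb : b ≤ γ.len) :
    GeoSeg X where
  len := b - a
  len_nonneg := by linarith
  f t := γ.f (a + t)
  isom := by
    intro u hu v hv
    rw [γ.isom (a + u) ⟨by linarith [hu.1], by linarith [hu.2]⟩ (a + v)
        ⟨by linarith [hv.1], by linarith [hv.2]⟩]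
    congr 1; ring

lemma restrict_src (γ : GeoSeg X) (a b : ℝ) (h0 : 0 ≤ a) (hab : a ≤ b) (hb : b ≤ γ.len) :
    (γ.restrict a b h0 hab hb).src = γ.f a := by
  show γ.f (a + 0) = γ.f a
  rw [add_zero]

lemma restrict_tgt (γ : GeoSeg X) (a b : ℝ) (h0 : 0 ≤ a) (hab : a ≤ b) (hb : b ≤ γ.len) :
    (γ.restrict a b h0 hab hb).tgt = γ.f b := by
  show γ.f (a + (b - a)) = γ.f b
  congr 1; ring

lemma restrict_im (γ : GeoSeg X) (a b : ℝ) (h0 : 0 ≤ a) (hab : a ≤ b) (hb : b ≤ γ.len) :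
    (γ.restrict a b h0 hab hb).im ⊆ γ.f '' Set.Icc a b := by
  rintro z ⟨t, ht, rfl⟩
  have ht1 : (0:ℝ) ≤ t := ht.1
  have ht2 : t ≤ b - a := ht.2
  exact ⟨a + t, ⟨by linarith, by linarith⟩, rfl⟩

/-- Reversal of a geodesic segment. -/
def reverse (γ : GeoSeg X) : GeoSeg X where
  len := γ.len
  len_nonneg := γ.len_nonneg
  f t := γ.f (γ.len - t)
  isom := by
    intro u hu v hv
    rw [γ.isom (γ.len - u) ⟨by linarith [hu.2], by linarith [hu.1]⟩ (γ.len - v)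
        ⟨by linarith [hv.2], by linarith [hv.1]⟩,
      show γ.len - u - (γ.len - v) = v - u by ring, abs_sub_comm]

lemma reverse_src (γ : GeoSeg X) : γ.reverse.src = γ.tgt := by
  show γ.f (γ.len - 0) = γ.f γ.len
  rw [sub_zero]

lemma reverse_tgt (γ : GeoSeg X) : γ.reverse.tgt = γ.src := by
  show γ.f (γ.len - γ.len) = γ.f 0
  rw [sub_self]

lemma reverse_im (γ : GeoSeg X) : γ.reverse.im ⊆ γ.im := by
  rintro z ⟨t, ht, rfl⟩
  have ht1 : (0:ℝ) ≤ t := ht.1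
  have ht2 : t ≤ γ.len := ht.2
  exact ⟨γ.len - t, ⟨by linarith, by linarith⟩, rfl⟩

/-- Constant (degenerate) geodesic segment. -/
def cst (x : X) : GeoSeg X where
  len := 0
  len_nonneg := le_refl 0
  f _ := x
  isom := by
    intro u hu v hv
    have hu' : u = 0 := le_antisymm hu.2 hu.1
    have hv' : v = 0 := le_antisymm hv.2 hv.1
    simp [hu', hv']

lemma cst_src (x : X) : (cst x).src = x := rfl

lemma cst_tgt (x : X) : (cst x).tgt = x := rfl

lemma cst_im (x : X) : (cst (X := X) x).im ⊆ {x} := by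
  rintro z ⟨t, _, rfl⟩; rfl

lemma im_compact (γ : GeoSeg X) : IsCompact γ.im := by
  apply isCompact_Icc.image_of_continuousOn
  apply LipschitzOnWith.continuousOn (K := 1)
  apply LipschitzOnWith.of_dist_le_mul
  intro u hu v hv
  rw [γ.isom u hu v hv, Real.dist_eq, NNReal.coe_one, one_mul]

lemma im_nonempty (γ : GeoSeg X) : γ.im.Nonempty :=
  ⟨γ.f 0, 0, ⟨le_refl 0, γ.len_nonneg⟩, rfl⟩

end GeoSeg

lemma stepCost_nonneg (K : ContractionGauge) (a b : X) : 0 ≤ stepCost K a b := by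
  unfold stepCost
  split_ifs
  · exact le_min dist_nonneg zero_le_one
  · exact dist_nonneg

lemma chainCost_nonneg (K : ContractionGauge) : ∀ l : List X, 0 ≤ chainCost K l
  | [] => le_refl 0
  | [_] => le_refl 0
  | a :: b :: l => add_nonneg (stepCost_nonneg K a b) (chainCost_nonneg K (b :: l))

lemma hatDist_le_stepCost (K : ContractionGauge) (x y : X) :
    hatDist K x y ≤ stepCost K x y := by
  apply csInf_le
  · exact ⟨0, by rintro c ⟨l, -, -, rfl⟩; exact chainCost_nonneg K l⟩
  · exact ⟨[x, y], rfl, by simp, by simp [chainCost]⟩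

lemma key_anti {X : Type*} [MetricSpace X] (K : ContractionGauge)
    (γ γ' γ'' : GeoSeg X)
    (h1 : γ.tgt = γ'.src) (h2 : γ'.tgt = γ''.src) (h3 : γ''.tgt = γ.src)
    (p q : X) (hp : p ∈ γ.im) (hq : q ∈ γ'.im ∪ γ''.im)
    (hqmin : ∀ q' ∈ γ'.im ∪ γ''.im, dist p q ≤ dist p q')
    (hd : 1 ≤ dist p q) : AntiContracting K p q := by
  refine ⟨hd, ?_⟩
  intro r hr g hsrc htgt σ hsub hK hthin
  obtain ⟨a, ha0, hal, hf⟩ := hsub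
  have hσ : 4 * r + 1 ≤ σ.len :=
    (ENNReal.ofReal_le_ofReal_iff σ.len_nonneg).mp ((K.lb r hr).trans hK)
  have hglen : dist p q = g.len := by
    rw [← hsrc, ← htgt]
    show dist (g.f 0) (g.f g.len) = g.len
    rw [g.isom 0 ⟨le_refl 0, g.len_nonneg⟩ g.len ⟨g.len_nonneg, le_refl _⟩,
      abs_of_nonpos (by linarith [g.len_nonneg])]
    ring
  have hmid : σ.mid = g.f (a + σ.len / 2) := by
    unfold GeoSeg.mid
    exact hf (σ.len / 2) ⟨by linarith, by linarith⟩
  have hpm : dist p σ.mid = a + σ.len / 2 := by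
    rw [hmid, ← hsrc]
    show dist (g.f 0) (g.f (a + σ.len / 2)) = a + σ.len / 2
    rw [g.isom 0 ⟨le_refl 0, g.len_nonneg⟩ (a + σ.len / 2) ⟨by linarith, by linarith⟩,
      abs_of_nonpos (by linarith)]
    ring
  -- Points of the two other triangle sides are `r`-far from the midpoint.
  have factA : ∀ z ∈ γ'.im ∪ γ''.im, ¬ dist z σ.mid ≤ r := by
    intro z hz hle
    have hA := hqmin z hz
    have hB : dist p z ≤ dist p σ.mid + dist σ.mid z := dist_triangle _ _ _
    rw [dist_comm σ.mid z] at hB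
    linarith
  obtain ⟨tp, htp, hptp⟩ := hp
  -- One of the two pieces of `γ` cut at `p` is `r`-far from the midpoint.
  have factB : (∀ t ∈ Set.Icc (0 : ℝ) tp, ¬ dist (γ.f t) σ.mid ≤ r) ∨
      (∀ t ∈ Set.Icc tp γ.len, ¬ dist (γ.f t) σ.mid ≤ r) := by
    by_contra hcon
    push_neg at hcon
    obtain ⟨⟨t₁, ht₁, hd₁⟩, ⟨t₂, ht₂, hd₂⟩⟩ := hcon
    have e12 : dist (γ.f t₁) (γ.f t₂) = t₂ - t₁ := by
      rw [γ.isom t₁ ⟨ht₁.1, le_trans ht₁.2 htp.2⟩ t₂ ⟨le_trans htp.1 ht₂.1, ht₂.2⟩,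
        abs_of_nonpos (by linarith [ht₁.2, ht₂.1])]
      ring
    have e1p : dist (γ.f t₁) p = tp - t₁ := by
      rw [← hptp, γ.isom t₁ ⟨ht₁.1, le_trans ht₁.2 htp.2⟩ tp htp,
        abs_of_nonpos (by linarith [ht₁.2])]
      ring
    have e2p : dist (γ.f t₂) p = t₂ - tp := by
      rw [← hptp, γ.isom t₂ ⟨le_trans htp.1 ht₂.1, ht₂.2⟩ tp htp,
        abs_of_nonneg (by linarith [ht₂.1])]
    have hq1 : dist p σ.mid ≤ dist p (γ.f t₁) + dist (γ.f t₁) σ.mid := dist_triangle _ _ _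
    have hq2 : dist p σ.mid ≤ dist p (γ.f t₂) + dist (γ.f t₂) σ.mid := dist_triangle _ _ _
    have hq3 : dist (γ.f t₁) (γ.f t₂) ≤ dist (γ.f t₁) σ.mid + dist σ.mid (γ.f t₂) :=
      dist_triangle _ _ _
    rw [dist_comm p (γ.f t₁)] at hq1
    rw [dist_comm p (γ.f t₂)] at hq2
    rw [dist_comm σ.mid (γ.f t₂)] at hq3
    linarith
  have himsub : ∀ (τ : GeoSeg X) (c : ℝ) (hc : 0 ≤ c) (hcl : c ≤ τ.len),
      τ.f '' Set.Icc c τ.len ⊆ τ.im := by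
    rintro τ c hc hcl z ⟨t, ht, rfl⟩
    exact ⟨t, ⟨le_trans hc ht.1, ht.2⟩, rfl⟩
  have himsub' : ∀ (τ : GeoSeg X) (c : ℝ) (hc : 0 ≤ c) (hcl : c ≤ τ.len),
      τ.f '' Set.Icc 0 c ⊆ τ.im := by
    rintro τ c hc hcl z ⟨t, ht, rfl⟩
    exact ⟨t, ⟨ht.1, le_trans ht.2 hcl⟩, rfl⟩
  rcases hq with hq' | hq'' <;> obtain ⟨tq, htq, hqtq⟩ := ‹_›
  · rcases factB with hP1 | hP2
    · -- go from `q` along `γ'` then `γ''` and back along the initial piece of `γ`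
      obtain ⟨z, hz, hzr⟩ := hthin g (γ'.restrict tq γ'.len htq.1 htq.2 (le_refl _)) γ''
        (γ.restrict 0 tp (le_refl 0) htp.1 htp.2)
        (by rw [htgt, GeoSeg.restrict_src]; exact hqtq.symm)
        (by rw [GeoSeg.restrict_tgt]; exact h2)
        (by rw [GeoSeg.restrict_src]; exact h3)
        (by rw [GeoSeg.restrict_tgt, hsrc]; exact hptp)
        ⟨a, ha0, hal, hf⟩
      rcases hz with (hz2 | hz3) | hz4
      · exact factA z (Or.inl (himsub γ' tq htq.1 htq.2 (γ'.restrict_im _ _ _ _ _ hz2))) hzr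
      · exact factA z (Or.inr hz3) hzr
      · obtain ⟨t, ht, rfl⟩ := γ.restrict_im _ _ _ _ _ hz4
        exact hP1 t ht hzr
    · -- go from `q` back along `γ'` and then back along the final piece of `γ`
      obtain ⟨z, hz, hzr⟩ := hthin g ((γ'.restrict 0 tq (le_refl 0) htq.1 htq.2).reverse)
        (GeoSeg.cst γ'.src) ((γ.restrict tp γ.len htp.1 htp.2 (le_refl _)).reverse)
        (by rw [htgt, GeoSeg.reverse_src, GeoSeg.restrict_tgt]; exact hqtq.symm)
        (by rw [GeoSeg.reverse_tgt, GeoSeg.restrict_src, GeoSeg.cst_src]; rfl)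
        (by rw [GeoSeg.cst_tgt, GeoSeg.reverse_src, GeoSeg.restrict_tgt]; exact h1.symm)
        (by rw [GeoSeg.reverse_tgt, GeoSeg.restrict_src, hsrc]; exact hptp)
        ⟨a, ha0, hal, hf⟩
      rcases hz with (hz2 | hz3) | hz4
      · exact factA z (Or.inl (himsub' γ' tq htq.1 htq.2
          (γ'.restrict_im _ _ _ _ _ ((γ'.restrict 0 tq _ _ _).reverse_im hz2)))) hzr
      · have hz3' := GeoSeg.cst_im γ'.src hz3
        rw [Set.mem_singleton_iff] at hz3'
        refine factA z (Or.inl ?_) hzr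
        rw [hz3']
        exact ⟨0, ⟨le_refl 0, γ'.len_nonneg⟩, rfl⟩
      · obtain ⟨t, ht, rfl⟩ :=
          γ.restrict_im _ _ _ _ _ ((γ.restrict tp γ.len _ _ _).reverse_im hz4)
        exact hP2 t ht hzr
  · rcases factB with hP1 | hP2
    · -- go from `q` along `γ''` and back along the initial piece of `γ`
      obtain ⟨z, hz, hzr⟩ := hthin g (γ''.restrict tq γ''.len htq.1 htq.2 (le_refl _))
        (GeoSeg.cst γ''.tgt) (γ.restrict 0 tp (le_refl 0) htp.1 htp.2)
        (by rw [htgt, GeoSeg.restrict_src]; exact hqtq.symm)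
        (by rw [GeoSeg.restrict_tgt, GeoSeg.cst_src]; rfl)
        (by rw [GeoSeg.cst_tgt, GeoSeg.restrict_src]; exact h3)
        (by rw [GeoSeg.restrict_tgt, hsrc]; exact hptp)
        ⟨a, ha0, hal, hf⟩
      rcases hz with (hz2 | hz3) | hz4
      · exact factA z (Or.inr (himsub γ'' tq htq.1 htq.2 (γ''.restrict_im _ _ _ _ _ hz2))) hzr
      · have hz3' := GeoSeg.cst_im γ''.tgt hz3
        rw [Set.mem_singleton_iff] at hz3'
        refine factA z (Or.inr ?_) hzr
        rw [hz3']
        exact ⟨γ''.len, ⟨γ''.len_nonneg, le_refl _⟩, rfl⟩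
      · obtain ⟨t, ht, rfl⟩ := γ.restrict_im _ _ _ _ _ hz4
        exact hP1 t ht hzr
    · -- go from `q` back along `γ''`, back along `γ'`, then back along the final piece of `γ`
      obtain ⟨z, hz, hzr⟩ := hthin g ((γ''.restrict 0 tq (le_refl 0) htq.1 htq.2).reverse)
        γ'.reverse ((γ.restrict tp γ.len htp.1 htp.2 (le_refl _)).reverse)
        (by rw [htgt, GeoSeg.reverse_src, GeoSeg.restrict_tgt]; exact hqtq.symm)
        (by rw [GeoSeg.reverse_tgt, GeoSeg.restrict_src, GeoSeg.reverse_src]; exact h2.symm)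
        (by rw [GeoSeg.reverse_tgt, GeoSeg.reverse_src, GeoSeg.restrict_tgt]; exact h1.symm)
        (by rw [GeoSeg.reverse_tgt, GeoSeg.restrict_src, hsrc]; exact hptp)
        ⟨a, ha0, hal, hf⟩
      rcases hz with (hz2 | hz3) | hz4
      · exact factA z (Or.inr (himsub' γ'' tq htq.1 htq.2
          (γ''.restrict_im _ _ _ _ _ ((γ''.restrict 0 tq _ _ _).reverse_im hz2)))) hzr
      · exact factA z (Or.inl (γ'.reverse_im hz3)) hzr
      · obtain ⟨t, ht, rfl⟩ :=
          γ.restrict_im _ _ _ _ _ ((γ.restrict tp γ.len _ _ _).reverse_im hz4)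
        exact hP2 t ht hzr

/-- In a geodesic triangle `(γ, γ', γ'')` in `X`, every point `p` on `γ`
satisfies `d̂(p, q) ≤ 1`, where `q` is a point of `γ' ∪ γ''` closest to `p` with respect
to `d`; in particular `γ` is contained in the closed `1`-neighbourhood of `γ' ∪ γ''`
with respect to `d̂`. -/
theorem triangles_thin_in_contraction_space
    {X : Type*} [MetricSpace X] (hX : GeodSpace X) (K : ContractionGauge)
    (γ γ' γ'' : GeoSeg X)
    (h1 : γ.tgt = γ'.src) (h2 : γ'.tgt = γ''.src) (h3 : γ''.tgt = γ.src)
    (p q : X) (hp : p ∈ γ.im) (hq : q ∈ γ'.im ∪ γ''.im)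
    (hqmin : ∀ q' ∈ γ'.im ∪ γ''.im, dist p q ≤ dist p q') :
    hatDist K p q ≤ 1 ∧
      ∀ p' ∈ γ.im, ∃ q' ∈ γ'.im ∪ γ''.im, hatDist K p' q' ≤ 1 := by
  have key : ∀ p₀ q₀ : X, p₀ ∈ γ.im → q₀ ∈ γ'.im ∪ γ''.im →
      (∀ q' ∈ γ'.im ∪ γ''.im, dist p₀ q₀ ≤ dist p₀ q') → hatDist K p₀ q₀ ≤ 1 := by
    intro p₀ q₀ hp₀ hq₀ hmin₀
    refine le_trans (hatDist_le_stepCost K p₀ q₀) ?_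
    rcases le_or_gt (dist p₀ q₀) 1 with h | h
    · unfold stepCost
      split_ifs
      · exact le_trans (min_le_left _ _) h
      · exact h
    · have hac := key_anti K γ γ' γ'' h1 h2 h3 p₀ q₀ hp₀ hq₀ hmin₀ h.le
      unfold stepCost
      rw [if_pos hac]
      exact min_le_right _ _
  refine ⟨key p q hp hq hqmin, ?_⟩
  intro p' hp'
  have hcs : IsCompact (γ'.im ∪ γ''.im) := (γ'.im_compact).union (γ''.im_compact)
  have hne : (γ'.im ∪ γ''.im).Nonempty := γ'.im_nonempty.mono Set.subset_union_left
  obtain ⟨q', hq', hdq⟩ := hcs.exists_infDist_eq_dist hne p'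
  refine ⟨q', hq', key p' q' hp' hq' ?_⟩
  intro q'' hq''
  rw [← hdq]
  exact Metric.infDist_le_dist_of_mem hq''
end

section
/- Let G be a group acting coboundedly by isometries on a hyperbolic geodesic metric space Y. Then either Y has bounded diameter, or there exists an element g ∈ G acting loxodromically on Y (i.e., n ↦ g^n y is a quasi-isometric embedding of ℤ for some y ∈ Y). In particular, a cobounded action on an unbounded hyperbolic space cannot be parabolic. -/
open Metric Set
open scoped ENNReal

variable {X : Type*} [MetricSpace X]

/-! ### Auxiliary material for the proof -/

/-- The Gromov product `(y|z)_x`. -/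
noncomputable def myGP {Y : Type*} [MetricSpace Y] (x y z : Y) : ℝ :=
  (dist x y + dist x z - dist y z) / 2

section AuxHyp

variable {Y : Type*} [MetricSpace Y]

lemma myGP_comm (x y z : Y) : myGP x y z = myGP x z y := by
  unfold myGP; rw [dist_comm z y]; ring

lemma four_to_gp {δ : ℝ} (hhyp : FourPointHyp (fun a b : Y => dist a b) δ) :
    ∀ o x y z : Y, min (myGP o x y) (myGP o y z) - δ ≤ myGP o x z := by
  intro o x y z
  have h : dist x z + dist y o ≤ max (dist x y + dist z o) (dist y z + dist x o) + 2 * δ :=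
    hhyp o x y z
  unfold myGP
  rcases le_total (dist x y + dist z o) (dist y z + dist x o) with h' | h'
  · rw [max_eq_right h'] at h
    have h1 := min_le_right ((dist o x + dist o y - dist x y) / 2)
      ((dist o y + dist o z - dist y z) / 2)
    have e1 := dist_comm o x; have e2 := dist_comm o y; have e3 := dist_comm o z
    linarith
  · rw [max_eq_left h'] at h
    have h1 := min_le_left ((dist o x + dist o y - dist x y) / 2)
      ((dist o y + dist o z - dist y z) / 2)
    have e1 := dist_comm o x; have e2 := dist_comm o y; have e3 := dist_comm o z
    linarith

lemma myGP_base_lip (x x' y z : Y) : myGP x y z ≤ myGP x' y z + dist x x' := by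
  unfold myGP
  have h1 := dist_triangle x x' y
  have h2 := dist_triangle x x' z
  linarith

lemma myGP_arg_lip (x y y' z : Y) : myGP x y z ≤ myGP x y' z + dist y y' := by
  unfold myGP
  have h1 := dist_triangle x y' y
  have h2 := dist_triangle y' y z
  have e1 := dist_comm y' y
  linarith

lemma myGP_arg3_lip (x y z z' : Y) : myGP x y z ≤ myGP x y z' + dist z z' := by
  rw [myGP_comm x y z, myGP_comm x y z']
  exact myGP_arg_lip x z z' y

lemma geo_dist' (σ : GeoSeg Y) {u v : ℝ} (h0 : 0 ≤ u) (huv : u ≤ v) (hv : v ≤ σ.len) :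
    dist (σ.f u) (σ.f v) = v - u := by
  rw [σ.isom u ⟨h0, le_trans huv hv⟩ v ⟨le_trans h0 huv, hv⟩, abs_sub_comm,
    abs_of_nonneg (by linarith)]

variable {G : Type*} [Group G] [MulAction G Y]

lemma myGP_smul (hdist : ∀ (u : G) (x y : Y), dist (u • x) (u • y) = dist x y)
    (u : G) (x y z : Y) : myGP (u • x) (u • y) (u • z) = myGP x y z := by
  unfold myGP; rw [hdist, hdist, hdist]

/-- If the square of `u` does not make definite progress, then `u` almost fixes the
point at parameter `t` (just below half) of a geodesic from `y` to `u • y`. -/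
lemma midmove {δ : ℝ} (hδ : 0 ≤ δ)
    (hg4 : ∀ o x y z : Y, min (myGP o x y) (myGP o y z) - δ ≤ myGP o x z)
    (hdist : ∀ (u : G) (x y : Y), dist (u • x) (u • y) = dist x y)
    (u : G) (y : Y) (γ : GeoSeg Y) (hs : γ.f 0 = y) (htg : γ.f γ.len = u • y)
    (hstar1 : dist y ((u * u) • y) ≤ dist y (u • y) + (2 * δ + 2))
    {t : ℝ} (htdef : γ.len - 2 * t = 2 * δ + 2) (ht0 : 0 ≤ t) :
    dist (γ.f t) (u • γ.f t) ≤ 6 * δ + 2 := by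
  have hlen0 := γ.len_nonneg
  have hl : dist y (u • y) = γ.len := by
    rw [← htg, ← hs, geo_dist' γ le_rfl hlen0 le_rfl]; ring
  have h1 : (0:ℝ) ≤ γ.len - t := by linarith
  have h2 : t ≤ γ.len - t := by linarith
  have dm' : dist (γ.f (γ.len - t)) (u • y) = t := by
    rw [← htg, geo_dist' γ h1 (by linarith) le_rfl]; ring
  have dmy : dist y (γ.f (γ.len - t)) = γ.len - t := by
    rw [← hs, geo_dist' γ le_rfl h1 (by linarith)]; ring
  have dyt : dist y (γ.f t) = t := by
    rw [← hs, geo_dist' γ le_rfl ht0 (by linarith)]; ring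
  have dut : dist (u • y) (γ.f t) = γ.len - t := by
    rw [← htg, dist_comm, geo_dist' γ ht0 (by linarith) le_rfl]
  have dmm : dist (γ.f t) (γ.f (γ.len - t)) = 2 * δ + 2 := by
    rw [geo_dist' γ ht0 h2 (by linarith)]; linarith
  have hD2 : dist (u • y) ((u * u) • y) = dist y (u • y) := by
    rw [mul_smul]; exact hdist u y (u • y)
  have sgeq : t ≤ myGP (u • y) y ((u * u) • y) := by
    unfold myGP
    have e1 := dist_comm y (u • y)
    linarith
  have A1 : myGP (u • y) (γ.f (γ.len - t)) y = t := by
    unfold myGP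
    have e1 := dist_comm (u • y) (γ.f (γ.len - t))
    have e2 := dist_comm y (u • y)
    have e3 := dist_comm (γ.f (γ.len - t)) y
    linarith
  have A2 : myGP (u • y) ((u * u) • y) (u • γ.f t) = t := by
    have hh := myGP_smul hdist u y (u • y) (γ.f t)
    rw [← mul_smul] at hh
    rw [hh]
    unfold myGP
    have e1 := dist_comm (u • y) (γ.f t)
    linarith
  have B1 : t - δ ≤ myGP (u • y) (γ.f (γ.len - t)) ((u * u) • y) := by
    have h := hg4 (u • y) (γ.f (γ.len - t)) y ((u * u) • y)
    rcases min_cases (myGP (u • y) (γ.f (γ.len - t)) y)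
      (myGP (u • y) y ((u * u) • y)) with ⟨hm, _⟩ | ⟨hm, _⟩ <;> rw [hm] at h <;> linarith
  have B2 : t - 2 * δ ≤ myGP (u • y) (γ.f (γ.len - t)) (u • γ.f t) := by
    have h := hg4 (u • y) (γ.f (γ.len - t)) ((u * u) • y) (u • γ.f t)
    rcases min_cases (myGP (u • y) (γ.f (γ.len - t)) ((u * u) • y))
      (myGP (u • y) ((u * u) • y) (u • γ.f t)) with ⟨hm, _⟩ | ⟨hm, _⟩ <;>
      rw [hm] at h <;> linarith
  have huu : dist (u • y) (u • γ.f t) = t := by rw [hdist]; exact dyt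
  have C : dist (γ.f (γ.len - t)) (u • γ.f t) ≤ 4 * δ := by
    have : myGP (u • y) (γ.f (γ.len - t)) (u • γ.f t) =
        (t + t - dist (γ.f (γ.len - t)) (u • γ.f t)) / 2 := by
      unfold myGP
      have e1 := dist_comm (u • y) (γ.f (γ.len - t))
      rw [huu]
      linarith
    rw [this] at B2; linarith
  calc dist (γ.f t) (u • γ.f t)
      ≤ dist (γ.f t) (γ.f (γ.len - t)) + dist (γ.f (γ.len - t)) (u • γ.f t) :=
        dist_triangle _ _ _
    _ ≤ (2 * δ + 2) + 4 * δ := by rw [dmm]; linarith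
    _ = 6 * δ + 2 := by ring

end AuxHyp
section Loxo

variable {Y : Type*} [MetricSpace Y] {G : Type*} [Group G] [MulAction G Y]

lemma loxo_of_crit {δ : ℝ} (hδ : 0 ≤ δ)
    (hg4 : ∀ o x y z : Y, min (myGP o x y) (myGP o y z) - δ ≤ myGP o x z)
    (hdist : ∀ (u : G) (x y : Y), dist (u • x) (u • y) = dist x y)
    (g : G) (y : Y)
    (hcrit : dist y (g • y) + (2 * δ + 2) < dist y ((g * g) • y)) :
    ∃ Q : ℝ, 1 ≤ Q ∧ ∀ m n : ℤ,
      |(m : ℝ) - (n : ℝ)| / Q - Q ≤ dist (g ^ m • y) (g ^ n • y) ∧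
      dist (g ^ m • y) (g ^ n • y) ≤ Q * |(m : ℝ) - (n : ℝ)| + Q := by
  set D1 : ℝ := dist y (g • y) with hD1
  set K : ℝ := myGP (g • y) y ((g * g) • y) with hK
  have hd2 : dist (g • y) ((g * g) • y) = D1 := by rw [mul_smul]; exact hdist g y (g • y)
  have hK2 : dist y ((g * g) • y) = 2 * D1 - 2 * K := by
    rw [hK]; unfold myGP
    have e1 := dist_comm (g • y) y
    linarith
  have hKnn : 0 ≤ K := by
    have h := dist_triangle y (g • y) ((g * g) • y)
    rw [hd2] at h; linarith
  have hD1c : 2 * K + 2 * δ + 2 < D1 := by rw [hK2] at hcrit; linarith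
  -- Claim 1 : Gromov products along the orbit stay small
  have claim1 : ∀ n : ℕ, myGP (g ^ (n + 1) • y) y (g ^ (n + 2) • y) ≤ K + δ := by
    intro n
    induction n with
    | zero =>
      have : myGP (g ^ 1 • y) y (g ^ 2 • y) = K := by
        rw [pow_one, pow_two]
      rw [this]; linarith
    | succ n ih =>
      have hstep : ∀ m : ℕ, dist (g ^ m • y) (g ^ (m + 1) • y) = D1 := by
        intro m
        have : g ^ (m + 1) • y = g ^ m • (g • y) := by rw [← mul_smul, ← pow_succ]
        rw [this, hdist]
      have h2 : D1 - K - δ ≤ myGP (g ^ (n + 2) • y) (g ^ (n + 1) • y) y := by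
        have hid : myGP (g ^ (n + 1) • y) y (g ^ (n + 2) • y) +
            myGP (g ^ (n + 2) • y) (g ^ (n + 1) • y) y
            = dist (g ^ (n + 1) • y) (g ^ (n + 2) • y) := by
          unfold myGP
          have e1 := dist_comm (g ^ (n + 1) • y) (g ^ (n + 2) • y)
          have e2 := dist_comm (g ^ (n + 1) • y) y
          have e3 := dist_comm y (g ^ (n + 2) • y)
          linarith
        rw [hstep (n + 1)] at hid
        linarith
      have h3 : myGP (g ^ (n + 2) • y) (g ^ (n + 1) • y) (g ^ (n + 3) • y) = K := by
        have e1 : g ^ (n + 2) • y = g ^ (n + 1) • (g • y) := by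
          rw [← mul_smul, ← pow_succ]
        have e2 : g ^ (n + 1) • y = g ^ (n + 1) • y := rfl
        have e3 : g ^ (n + 3) • y = g ^ (n + 1) • ((g * g) • y) := by
          rw [← mul_smul]
          congr 1
          rw [← pow_two, ← pow_add]
        rw [e1, e3, myGP_smul hdist]
      have h4 := hg4 (g ^ (n + 2) • y) (g ^ (n + 1) • y) y (g ^ (n + 3) • y)
      rw [h3] at h4
      by_contra hcon
      push_neg at hcon
      rcases min_cases (myGP (g ^ (n + 2) • y) (g ^ (n + 1) • y) y)
        (myGP (g ^ (n + 2) • y) y (g ^ (n + 3) • y)) with ⟨hm, hm'⟩ | ⟨hm, hm'⟩ <;>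
        rw [hm] at h4 <;> linarith
  set c : ℝ := D1 - 2 * K - 2 * δ with hc
  have hc2 : 2 < c := by linarith
  have claim2 : ∀ n : ℕ, (n : ℝ) * c ≤ dist y (g ^ n • y) := by
    intro n
    induction n with
    | zero => simp
    | succ n ih =>
      rcases Nat.eq_zero_or_pos n with rfl | hn
      · have : g ^ 1 • y = g • y := by rw [pow_one]
        rw [this]
        push_cast
        linarith
      · obtain ⟨m, rfl⟩ := Nat.exists_eq_add_of_le hn
        have hcl := claim1 m
        have hstep : dist (g ^ (m + 1) • y) (g ^ (m + 2) • y) = D1 := by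
          have : g ^ (m + 2) • y = g ^ (m + 1) • (g • y) := by rw [← mul_smul, ← pow_succ]
          rw [this, hdist]
        have hid : dist y (g ^ (m + 2) • y) =
            dist y (g ^ (m + 1) • y) + dist (g ^ (m + 1) • y) (g ^ (m + 2) • y)
              - 2 * myGP (g ^ (m + 1) • y) y (g ^ (m + 2) • y) := by
          unfold myGP
          have e1 := dist_comm y (g ^ (m + 1) • y)
          linarith
        have : (1 + m : ℕ) + 1 = m + 2 := by omega
        rw [this] at *
        have hm1 : (1 + m : ℕ) = m + 1 := by omega
        rw [hm1] at ih
        rw [hid, hstep]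
        push_cast at ih ⊢
        linarith
  have claim3 : ∀ n : ℕ, dist y (g ^ n • y) ≤ (n : ℝ) * D1 := by
    intro n
    induction n with
    | zero => simp
    | succ n ih =>
      have hstep : dist (g ^ n • y) (g ^ (n + 1) • y) = D1 := by
        have : g ^ (n + 1) • y = g ^ n • (g • y) := by rw [← mul_smul, ← pow_succ]
        rw [this, hdist]
      have := dist_triangle y (g ^ n • y) (g ^ (n + 1) • y)
      rw [hstep] at this
      push_cast
      linarith
  -- reduction of integer powers to natural powers
  have hzn : ∀ m n : ℤ, dist (g ^ m • y) (g ^ n • y) = dist y (g ^ ((m - n).natAbs) • y) := by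
    have habs : ∀ k : ℤ, dist (g ^ k • y) y = dist y (g ^ (k.natAbs) • y) := by
      intro k
      rcases le_or_gt 0 k with hk | hk
      · lift k to ℕ using hk
        rw [zpow_natCast, Int.natAbs_natCast, dist_comm]
      · have h1 : dist (g ^ k • y) y = dist (g ^ (-k) • (g ^ k • y)) (g ^ (-k) • y) :=
          (hdist _ _ _).symm
        have h2 : g ^ (-k) • (g ^ k • y) = y := by
          rw [← mul_smul, ← zpow_add, neg_add_cancel, zpow_zero, one_smul]
        rw [h1, h2]
        have h3 : (-k).toNat = k.natAbs := by omega
        have h4 : g ^ (-k) = g ^ (k.natAbs) := by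
          rw [← h3, ← zpow_natCast, Int.toNat_of_nonneg (by omega)]
        rw [h4]
    intro m n
    have h1 : dist (g ^ m • y) (g ^ n • y) = dist (g ^ (m - n) • y) y := by
      have e1 : dist (g ^ m • y) (g ^ n • y)
          = dist (g ^ (-n) • (g ^ m • y)) (g ^ (-n) • (g ^ n • y)) := (hdist _ _ _).symm
      have e2 : g ^ (-n) • (g ^ m • y) = g ^ (m - n) • y := by
        rw [← mul_smul, ← zpow_add]; ring_nf
      have e3 : g ^ (-n) • (g ^ n • y) = y := by
        rw [← mul_smul, ← zpow_add, neg_add_cancel, zpow_zero, one_smul]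
      rw [e1, e2, e3]
    rw [h1, habs]
  have hD1nn : 0 ≤ D1 := dist_nonneg
  refine ⟨max D1 1, le_max_right _ _, ?_⟩
  set Q : ℝ := max D1 1 with hQ
  have hQ1 : 1 ≤ Q := le_max_right _ _
  have hQD : D1 ≤ Q := le_max_left _ _
  have hQ0 : 0 < Q := by linarith
  intro m n
  rw [hzn m n]
  set k : ℕ := (m - n).natAbs with hk
  have habs2 : |(m : ℝ) - (n : ℝ)| = (k : ℝ) := by
    have e : (m : ℝ) - (n : ℝ) = ((m - n : ℤ) : ℝ) := by push_cast; ring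
    rw [hk, e, ← Int.cast_abs, Int.abs_eq_natAbs, Int.cast_natCast]
  rw [habs2]
  constructor
  · rcases Nat.eq_zero_or_pos k with hk0 | hkpos
    · rw [hk0]
      simp only [Nat.cast_zero, zero_div, zero_sub, pow_zero, one_smul, dist_self]
      linarith
    · have h1 : (k : ℝ) * c ≤ dist y (g ^ k • y) := claim2 k
      have h2 : (k : ℝ) / Q ≤ (k : ℝ) := by
        apply div_le_self (by positivity) hQ1
      have h3 : (1 : ℝ) ≤ (k : ℝ) := by exact_mod_cast hkpos
      nlinarith
  · have h1 := claim3 k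
    have h2 : (k : ℝ) * D1 ≤ (k : ℝ) * Q := by
      apply mul_le_mul_of_nonneg_left hQD (by positivity)
    nlinarith

end Loxo
section Bounded

variable {Y : Type*} [MetricSpace Y] {G : Type*} [Group G] [MulAction G Y]

set_option maxHeartbeats 1000000 in
lemma bounded_of_star (hY : GeodSpace Y) {δ : ℝ} (hδ : 0 ≤ δ)
    (hg4 : ∀ o x y z : Y, min (myGP o x y) (myGP o y z) - δ ≤ myGP o x z)
    (hdist : ∀ (u : G) (x y : Y), dist (u • x) (u • y) = dist x y)
    (o : Y) {R : ℝ} (hR0 : 0 ≤ R) (hcob : ∀ y : Y, ∃ g : G, dist y (g • o) ≤ R)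
    (hstar : ∀ (u : G) (x : Y), dist x ((u * u) • x) ≤ dist x (u • x) + (2 * δ + 2)) :
    ∀ x y : Y, dist x y ≤ 100 * (100 * (R + δ + 1) + R + δ + 1) + 2 * R := by
  set T : ℝ := 100 * (R + δ + 1) with hT
  set L2 : ℝ := 100 * (T + R + δ + 1) with hL2
  have key : ∀ b : G, dist o (b • o) ≤ L2 := by
    intro b
    by_contra hb
    push_neg at hb
    obtain ⟨γ, hγs, hγt⟩ := hY o (b • o)
    have hgs : γ.f 0 = o := hγs
    have hgt : γ.f γ.len = b • o := hγt
    have hlen0 := γ.len_nonneg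
    have hlb : dist o (b • o) = γ.len := by
      rw [← hgt, ← hgs, geo_dist' γ le_rfl hlen0 le_rfl]; ring
    set l : ℝ := γ.len with hldef
    have hl : L2 < l := by rw [← hlb]; exact hb
    -- basic positivity
    have hT0 : (0:ℝ) < T := by linarith
    have h2T0 : (0:ℝ) ≤ 2 * T := by linarith
    have h2Tl : 2 * T ≤ l := by linarith
    set tq : ℝ := (l - (2 * δ + 2)) / 2 with htqdef
    have htq0 : 0 ≤ tq := by linarith
    have htql : tq ≤ l := by linarith
    have h2Ttq : 2 * T ≤ tq := by linarith
    set q : Y := γ.f tq with hqdef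
    have hq : dist q (b • q) ≤ 6 * δ + 2 :=
      midmove hδ hg4 hdist b o γ hgs hgt (hstar b o) (by rw [htqdef]; ring) htq0
    -- choose the element a
    obtain ⟨a, ha⟩ := hcob (γ.f (2 * T))
    have e2 : dist o (γ.f (2 * T)) = 2 * T := by
      rw [← hgs, geo_dist' γ le_rfl h2T0 h2Tl]; ring
    set la : ℝ := dist o (a • o) with hladef
    have hla1 : 2 * T - R ≤ la := by
      have h := dist_triangle o (a • o) (γ.f (2 * T))
      have e := dist_comm (γ.f (2 * T)) (a • o)
      linarith
    have hla2 : la ≤ 2 * T + R := by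
      have h := dist_triangle o (γ.f (2 * T)) (a • o)
      linarith
    obtain ⟨γa, hγas, hγat⟩ := hY o (a • o)
    have hgas : γa.f 0 = o := hγas
    have hgat : γa.f γa.len = a • o := hγat
    have hlena0 := γa.len_nonneg
    have hlena : γa.len = la := by
      rw [hladef, ← hgat, ← hgas, geo_dist' γa le_rfl hlena0 le_rfl]; ring
    set tp : ℝ := (la - (2 * δ + 2)) / 2 with htpdef
    have htp0 : 0 ≤ tp := by linarith
    have htpla : tp ≤ la := by linarith
    have htp2T : tp ≤ 2 * T := by linarith
    have htptq : tp ≤ tq := by linarith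
    have htpl : tp ≤ l := by linarith
    set p : Y := γa.f tp with hpdef
    have hp : dist p (a • p) ≤ 6 * δ + 2 :=
      midmove hδ hg4 hdist a o γa hgas hgat (hstar a o) (by rw [htpdef, hlena]; ring) htp0
    -- distance evaluations
    set w : Y := γ.f tp with hwdef
    have e7 : dist o p = tp := by
      rw [hpdef, ← hgas, geo_dist' γa le_rfl htp0 (by rw [hlena]; exact htpla)]; ring
    have e8 : dist p (a • o) = la - tp := by
      rw [hpdef, ← hgat, geo_dist' γa htp0 (by rw [hlena]; exact htpla) le_rfl, hlena]
    have e3 : dist o w = tp := by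
      rw [hwdef, ← hgs, geo_dist' γ le_rfl htp0 htpl]; ring
    have e1 : dist o q = tq := by
      rw [hqdef, ← hgs, geo_dist' γ le_rfl htq0 htql]; ring
    have e4 : dist w q = tq - tp := by
      rw [hwdef, hqdef, geo_dist' γ htp0 htptq htql]
    have e5 : dist w (γ.f (2 * T)) = 2 * T - tp := by
      rw [hwdef, geo_dist' γ htp0 htp2T h2Tl]
    have e6 : dist (γ.f (2 * T)) q = tq - 2 * T := by
      rw [hqdef, geo_dist' γ h2T0 h2Ttq htql]
    have eqb : dist q (b • o) = l - tq := by
      rw [hqdef, ← hgt, geo_dist' γ htq0 htql le_rfl]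
    have ewb : dist w (b • o) = l - tp := by
      rw [hwdef, ← hgt, geo_dist' γ htp0 htpl le_rfl]
    have e2b : dist (γ.f (2 * T)) (b • o) = l - 2 * T := by
      rw [← hgt, geo_dist' γ h2T0 h2Tl le_rfl]
    -- Gromov product estimates
    have g1 : myGP o p (a • o) = tp := by
      unfold myGP; rw [e7, e8, ← hladef]; ring
    have g2 : 2 * T - R ≤ myGP o (a • o) (γ.f (2 * T)) := by
      unfold myGP
      have e := dist_comm (a • o) (γ.f (2 * T))
      rw [← hladef, e2]
      linarith
    have g3 : myGP o (γ.f (2 * T)) (b • o) = 2 * T := by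
      unfold myGP; linarith [e2, hlb, e2b]
    have g4 : 2 * T - R - δ ≤ myGP o (a • o) (b • o) := by
      have h := hg4 o (a • o) (γ.f (2 * T)) (b • o)
      rcases min_cases (myGP o (a • o) (γ.f (2 * T))) (myGP o (γ.f (2 * T)) (b • o)) with
        ⟨hm, _⟩ | ⟨hm, _⟩ <;> rw [hm] at h <;> linarith
    have g5 : tp - δ ≤ myGP o p (b • o) := by
      have h := hg4 o p (a • o) (b • o)
      have htpb : tp ≤ 2 * T - R - δ := by linarith
      rcases min_cases (myGP o p (a • o)) (myGP o (a • o) (b • o)) with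
        ⟨hm, _⟩ | ⟨hm, _⟩ <;> rw [hm] at h <;> linarith
    have g6 : myGP o (b • o) w = tp := by
      unfold myGP
      linarith [hlb, e3, ewb, dist_comm (b • o) w]
    have g7 : tp - 2 * δ ≤ myGP o p w := by
      have h := hg4 o p (b • o) w
      rcases min_cases (myGP o p (b • o)) (myGP o (b • o) w) with
        ⟨hm, _⟩ | ⟨hm, _⟩ <;> rw [hm] at h <;> linarith
    have P1 : dist p w ≤ 4 * δ := by
      have : myGP o p w = (tp + tp - dist p w) / 2 := by
        unfold myGP; rw [e7, e3]
      rw [this] at g7; linarith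
    have d3 : dist p q ≤ tq - tp + 4 * δ := by
      have h := dist_triangle p w q
      rw [e4] at h; linarith
    have dbpo : dist (b • p) (b • o) = tp := by
      rw [hdist, dist_comm]; exact e7
    have d2 : l - 2 * tp ≤ dist p (b • p) := by
      have h1 := dist_triangle o p (b • p)
      have h2 := dist_triangle o (b • p) (b • o)
      linarith [dbpo, e7, hlb]
    have d4 : dist p (b • p) ≤ 2 * (tq - tp + 4 * δ) + (6 * δ + 2) := by
      have h1 := dist_triangle p q (b • p)
      have h2 := dist_triangle q (b • q) (b • p)
      have e : dist (b • q) (b • p) = dist q p := hdist b q p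
      have ec := dist_comm q p
      linarith
    have d5 : l - tp ≤ dist o (b • p) := by
      have h := dist_triangle o (b • p) (b • o)
      linarith [dbpo, hlb]
    set f : G := a * b with hfdef
    have hfp : f • p = a • (b • p) := by rw [hfdef, mul_smul]
    -- upper bound for (f p | a o)_p
    have gA : myGP p (f • p) (a • o) ≤ 12 * δ + 2 := by
      have s1 : myGP p (f • p) (a • o) ≤ myGP (a • p) (f • p) (a • o) + dist p (a • p) :=
        myGP_base_lip _ _ _ _
      have s2 : myGP (a • p) (f • p) (a • o) = myGP p (b • p) o := by
        rw [hfp]; exact myGP_smul hdist a p (b • p) o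
      have s3 : myGP p (b • p) o ≤ 6 * δ := by
        unfold myGP
        have ec1 := dist_comm p o
        have ec2 := dist_comm (b • p) o
        rw [ec1, e7]
        have h2tq : 2 * tq = l - (2 * δ + 2) := by rw [htqdef]; ring
        linarith
      linarith
    -- lower bound for (b⁻¹ p | q)_p and (q | a o)_p
    have dpbinv : dist p (b⁻¹ • p) = dist p (b • p) := by
      have e := hdist b p (b⁻¹ • p)
      rw [smul_inv_smul] at e
      rw [← e, dist_comm]
    have dqbinv : dist q (b⁻¹ • p) ≤ (6 * δ + 2) + dist q p := by
      have e := hdist b q (b⁻¹ • p)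
      rw [smul_inv_smul] at e
      have h := dist_triangle (b • q) q p
      have ec := dist_comm (b • q) q
      linarith
    have gB1 : (l - 2 * tp - (6 * δ + 2)) / 2 ≤ myGP p (b⁻¹ • p) q := by
      unfold myGP
      have ec1 := dist_comm (b⁻¹ • p) q
      have ec2 := dist_comm q p
      linarith
    have gv : myGP w q (γ.f (2 * T)) = 2 * T - tp := by
      unfold myGP
      linarith [e4, e5, e6, dist_comm q (γ.f (2 * T))]
    have gB2 : 2 * T - tp - 4 * δ - R ≤ myGP p q (a • o) := by
      have b1 : myGP w q (γ.f (2 * T)) ≤ myGP p q (γ.f (2 * T)) + dist w p :=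
        myGP_base_lip _ _ _ _
      have b2 : myGP p q (γ.f (2 * T)) ≤ myGP p q (a • o) + dist (γ.f (2 * T)) (a • o) :=
        myGP_arg3_lip _ _ _ _
      have ec := dist_comm w p
      linarith
    have gC : myGP p (f • p) (b⁻¹ • p) ≤ 13 * δ + 2 := by
      by_contra hcon
      push_neg at hcon
      have hB : 13 * δ + 2 < myGP p (b⁻¹ • p) (a • o) := by
        have h := hg4 p (b⁻¹ • p) q (a • o)
        have hgB1 : (13:ℝ) * δ + 2 + δ < (l - 2 * tp - (6 * δ + 2)) / 2 := by
          linarith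
        have hgB2 : (13:ℝ) * δ + 2 + δ < 2 * T - tp - 4 * δ - R := by
          linarith
        rcases min_cases (myGP p (b⁻¹ • p) q) (myGP p q (a • o)) with
          ⟨hm, _⟩ | ⟨hm, _⟩ <;> rw [hm] at h <;> linarith
      have h := hg4 p (f • p) (b⁻¹ • p) (a • o)
      rcases min_cases (myGP p (f • p) (b⁻¹ • p)) (myGP p (b⁻¹ • p) (a • o)) with
        ⟨hm, hm'⟩ | ⟨hm, hm'⟩ <;> rw [hm] at h <;> linarith
    have gK : myGP p (f⁻¹ • p) (f • p) ≤ 19 * δ + 4 := by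
      have dfb : dist (f⁻¹ • p) (b⁻¹ • p) ≤ 6 * δ + 2 := by
        have e1 : f⁻¹ • p = b⁻¹ • (a⁻¹ • p) := by rw [hfdef, mul_inv_rev, mul_smul]
        have e2 : dist (b⁻¹ • (a⁻¹ • p)) (b⁻¹ • p) = dist (a⁻¹ • p) p := hdist _ _ _
        have e3 : dist (a • (a⁻¹ • p)) (a • p) = dist (a⁻¹ • p) p := hdist _ _ _
        rw [smul_inv_smul] at e3
        rw [e1, e2, ← e3]
        exact hp
      have h1 : myGP p (f⁻¹ • p) (f • p) ≤ myGP p (b⁻¹ • p) (f • p) + dist (f⁻¹ • p) (b⁻¹ • p) :=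
        myGP_arg_lip _ _ _ _
      have h2 : myGP p (b⁻¹ • p) (f • p) = myGP p (f • p) (b⁻¹ • p) := myGP_comm _ _ _
      linarith
    have D1b : l - 2 * tp - (6 * δ + 2) ≤ dist p (f • p) := by
      rw [hfp]
      have t1 := dist_triangle (a • p) p (a • (b • p))
      have e : dist (a • p) (a • (b • p)) = dist p (b • p) := hdist _ _ _
      have ec := dist_comm (a • p) p
      linarith
    -- the contradiction
    have hsf := hstar f p
    have idd : dist (f • p) ((f * f) • p) = dist p (f • p) := by
      rw [mul_smul f f p]; exact hdist f p (f • p)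
    have gid : myGP (f • p) p ((f * f) • p) = myGP p (f⁻¹ • p) (f • p) := by
      have hs := myGP_smul hdist f⁻¹ (f • p) p ((f * f) • p)
      have e1 : f⁻¹ • (f • p) = p := inv_smul_smul f p
      have e2 : f⁻¹ • ((f * f) • p) = f • p := by
        rw [mul_smul f f p]; exact inv_smul_smul f (f • p)
      rw [e1, e2] at hs
      exact hs.symm
    have iddist : dist p ((f * f) • p) =
        dist (f • p) p + dist (f • p) ((f * f) • p) - 2 * myGP (f • p) p ((f * f) • p) := by
      unfold myGP; ring
    rw [iddist, gid, idd, dist_comm (f • p) p] at hsf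
    have hfinal : dist p (f • p) ≤ 2 * (19 * δ + 4) + 2 * δ + 2 := by linarith
    linarith
  -- conclude the diameter bound
  intro x y
  obtain ⟨gx, hgx⟩ := hcob x
  obtain ⟨gy, hgy⟩ := hcob y
  have e : dist (gx • o) (gy • o) = dist o ((gx⁻¹ * gy) • o) := by
    have h := hdist gx⁻¹ (gx • o) (gy • o)
    rw [inv_smul_smul, ← mul_smul] at h
    exact h.symm
  have hk := key (gx⁻¹ * gy)
  have t1 := dist_triangle x (gx • o) y
  have t2 := dist_triangle (gx • o) (gy • o) y
  have ec := dist_comm (gy • o) y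
  linarith

end Bounded
/-- If a group `G` acts coboundedly by isometries on a hyperbolic
geodesic metric space `Y`, then either `Y` is bounded or some `g ∈ G` acts
loxodromically on `Y`. -/
theorem cobounded_action_bounded_or_loxodromic
    {Y : Type*} [MetricSpace Y] (hY : GeodSpace Y)
    (δ : ℝ) (hδ : 0 ≤ δ) (hhyp : FourPointHyp (fun a b : Y => dist a b) δ)
    {G : Type*} [Group G] [MulAction G Y]
    (hiso : ∀ g : G, Isometry fun y : Y => g • y)
    (hcob : ∃ (y₀ : Y) (R : ℝ), ∀ y : Y, ∃ g : G, dist y (g • y₀) ≤ R) :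
    (∃ B : ℝ, ∀ y z : Y, dist y z ≤ B) ∨
      ∃ g : G, ∃ (y : Y) (Q : ℝ), 1 ≤ Q ∧ ∀ m n : ℤ,
        |(m : ℝ) - (n : ℝ)| / Q - Q ≤ dist (g ^ m • y) (g ^ n • y) ∧
        dist (g ^ m • y) (g ^ n • y) ≤ Q * |(m : ℝ) - (n : ℝ)| + Q := by
  obtain ⟨o, R, hcob⟩ := hcob
  have hdist : ∀ (u : G) (x y : Y), dist (u • x) (u • y) = dist x y := fun u x y =>
    (hiso u).dist_eq x y
  have hg4 := four_to_gp hhyp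
  by_cases hc : ∃ (g : G) (y : Y), dist y (g • y) + (2 * δ + 2) < dist y ((g * g) • y)
  · obtain ⟨g, y, hgy⟩ := hc
    obtain ⟨Q, hQ1, hQ⟩ := loxo_of_crit hδ hg4 hdist g y hgy
    exact Or.inr ⟨g, y, Q, hQ1, hQ⟩
  · push_neg at hc
    obtain ⟨g0, hg0⟩ := hcob o
    have hR0 : 0 ≤ R := le_trans dist_nonneg hg0
    exact Or.inl ⟨_, bounded_of_star hY hδ hg4 hdist o hR0 hcob hc⟩
end

section
/- Let X be a geodesic metric space and γ : I → X a geodesic segment of length at least 4r + 2 with midpoint m, and suppose every quadrangle containing γ as a subsegment of its first side meets the closed r-ball around m with one of its other three sides. Then for any geodesic λ and points p, q ∈ λ whose closest point projections p', q' to γ satisfy that m lies on γ between p' and q' with d(m, p') > 2r and d(m, q') > 2r, we have d(λ, m) ≤ r. -/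
open Metric Set
open scoped ENNReal

variable {X : Type*} [MetricSpace X]

lemma exists_subseg' {X : Type*} [MetricSpace X] (σ : GeoSeg X) {s t : ℝ}
    (hs : s ∈ Set.Icc 0 σ.len) (ht : t ∈ Set.Icc 0 σ.len) :
    ∃ τ : GeoSeg X, τ.src = σ.f s ∧ τ.tgt = σ.f t ∧ τ.im ⊆ σ.im := by
  obtain ⟨hs0, hs1⟩ := hs
  obtain ⟨ht0, ht1⟩ := ht
  refine ⟨⟨|t - s|, abs_nonneg _, fun u => if s ≤ t then σ.f (s + u) else σ.f (s - u), ?_⟩,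
    ?_, ?_, ?_⟩
  · intro p hp q hq
    obtain ⟨hp0, hp1⟩ := hp
    obtain ⟨hq0, hq1⟩ := hq
    by_cases h : s ≤ t
    · have habs : |t - s| = t - s := abs_of_nonneg (by linarith)
      rw [habs] at hp1 hq1
      simp only [if_pos h]
      rw [σ.isom (s + p) ⟨by linarith, by linarith⟩ (s + q) ⟨by linarith, by linarith⟩]
      ring_nf
    · push_neg at h
      have habs : |t - s| = s - t := by
        rw [abs_of_nonpos (by linarith : t - s ≤ (0:ℝ))]; ring
      rw [habs] at hp1 hq1
      simp only [if_neg (not_le.mpr h)]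
      rw [σ.isom (s - p) ⟨by linarith, by linarith⟩ (s - q) ⟨by linarith, by linarith⟩]
      rw [abs_sub_comm]
      ring_nf
  · simp [GeoSeg.src]
  · simp only [GeoSeg.tgt]
    by_cases h : s ≤ t
    · rw [if_pos h, abs_of_nonneg (by linarith : (0:ℝ) ≤ t - s)]; ring_nf
    · push_neg at h
      rw [if_neg (not_le.mpr h), abs_of_nonpos (by linarith : t - s ≤ (0:ℝ))]; ring_nf
  · rintro x ⟨p, hp, rfl⟩
    have hp0 : 0 ≤ p := hp.1
    have hp1 : p ≤ |t - s| := hp.2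
    by_cases h : s ≤ t
    · have hpt : p ≤ t - s := by
        rwa [abs_of_nonneg (by linarith : (0:ℝ) ≤ t - s)] at hp1
      show (if s ≤ t then σ.f (s + p) else σ.f (s - p)) ∈ σ.im
      rw [if_pos h]
      exact ⟨s + p, ⟨by linarith, by linarith⟩, rfl⟩
    · push_neg at h
      have hpt : p ≤ s - t := by
        rw [show |t - s| = s - t by rw [abs_of_nonpos (by linarith : t - s ≤ (0:ℝ))]; ring] at hp1
        exact hp1
      show (if s ≤ t then σ.f (s + p) else σ.f (s - p)) ∈ σ.im
      rw [if_neg (not_le.mpr h)]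
      exact ⟨s - p, ⟨by linarith, by linarith⟩, rfl⟩

lemma no_close_aux {X : Type*} [MetricSpace X] (γ : GeoSeg X) {r : ℝ}
    (c e w : X) {s : ℝ}
    (hproj : γ.f s ∈ ProjSet γ.im c)
    (hme : γ.len / 2 ≤ dist γ.mid e)
    (hse : dist (γ.f s) e < γ.len / 2 - 2 * r)
    (hsum : dist c w + dist w e = dist c e) :
    r < dist w γ.mid := by
  by_contra h
  push_neg at h
  have hmid : γ.mid ∈ γ.im :=
    ⟨γ.len / 2, ⟨by linarith [γ.len_nonneg], by linarith [γ.len_nonneg]⟩, rfl⟩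
  have h1 : dist c (γ.f s) ≤ dist c γ.mid := hproj.2 γ.mid hmid
  have h2 : dist c γ.mid ≤ dist c w + dist w γ.mid := dist_triangle _ _ _
  have h3 : dist c e ≤ dist c (γ.f s) + dist (γ.f s) e := dist_triangle _ _ _
  have h4 : dist γ.mid e ≤ dist γ.mid w + dist w e := dist_triangle _ _ _
  rw [dist_comm γ.mid w] at h4
  linarith

lemma key_thin {X : Type*} [MetricSpace X] (hX : GeodSpace X) (r : ℝ)
    (γ : GeoSeg X) (hthin : IsThin r γ)
    (lam : GeoSeg X) (a b : ℝ)
    (ha : a ∈ Set.Icc (0:ℝ) lam.len) (hb : b ∈ Set.Icc (0:ℝ) lam.len)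
    (u v : ℝ) (hu : u ∈ Set.Icc (0:ℝ) γ.len) (hv : v ∈ Set.Icc (0:ℝ) γ.len)
    (hp' : γ.f u ∈ ProjSet γ.im (lam.f a)) (hq' : γ.f v ∈ ProjSet γ.im (lam.f b))
    (hu2 : u ≤ γ.len / 2) (hv2 : γ.len / 2 ≤ v)
    (hdu : 2 * r < dist γ.mid (γ.f u)) (hdv : 2 * r < dist γ.mid (γ.f v)) :
    ∃ w ∈ lam.im, dist w γ.mid ≤ r := by
  have hln := γ.len_nonneg
  have hmem2 : γ.len / 2 ∈ Set.Icc (0:ℝ) γ.len := ⟨by linarith, by linarith⟩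
  have hmem0 : (0:ℝ) ∈ Set.Icc (0:ℝ) γ.len := ⟨le_refl 0, hln⟩
  have hmemL : γ.len ∈ Set.Icc (0:ℝ) γ.len := ⟨hln, le_refl _⟩
  -- distances along γ
  have hdu' : dist γ.mid (γ.f u) = γ.len / 2 - u := by
    rw [GeoSeg.mid, γ.isom _ hmem2 _ hu, abs_of_nonneg (by linarith)]
  have hdv' : dist γ.mid (γ.f v) = v - γ.len / 2 := by
    rw [GeoSeg.mid, γ.isom _ hmem2 _ hv, abs_of_nonpos (by linarith)]; ring
  rw [hdu'] at hdu
  rw [hdv'] at hdv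
  obtain ⟨γ₂, h2s, h2t⟩ := hX γ.tgt (lam.f b)
  obtain ⟨γ₃, h3s, h3t, h3im⟩ := exists_subseg' lam hb ha
  obtain ⟨γ₄, h4s, h4t⟩ := hX (lam.f a) γ.src
  obtain ⟨w, hw, hwm⟩ := hthin γ γ₂ γ₃ γ₄ h2s.symm (by rw [h2t, h3s]) (by rw [h3t, h4s]) h4t
    ⟨0, le_refl 0, by simp, fun t ht => by rw [zero_add]⟩
  rcases hw with (hw | hw) | hw
  · -- w on [γ.tgt, q]: impossible
    exfalso
    obtain ⟨t, ⟨ht0, ht1⟩, rfl⟩ := hw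
    have hcw : dist (lam.f b) (γ₂.f t) = γ₂.len - t := by
      rw [← h2t, GeoSeg.tgt, γ₂.isom _ ⟨γ₂.len_nonneg, le_refl _⟩ _ ⟨ht0, ht1⟩,
        abs_of_nonneg (by linarith)]
    have hwe : dist (γ₂.f t) γ.tgt = t := by
      rw [← h2s, GeoSeg.src, γ₂.isom _ ⟨ht0, ht1⟩ _ ⟨le_refl 0, γ₂.len_nonneg⟩,
        abs_of_nonneg (by linarith)]
      ring
    have hce : dist (lam.f b) γ.tgt = γ₂.len := by
      rw [← h2t, ← h2s, GeoSeg.tgt, GeoSeg.src,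
        γ₂.isom _ ⟨γ₂.len_nonneg, le_refl _⟩ _ ⟨le_refl 0, γ₂.len_nonneg⟩, sub_zero,
        abs_of_nonneg γ₂.len_nonneg]
    have hme : γ.len / 2 ≤ dist γ.mid γ.tgt := by
      rw [GeoSeg.mid, GeoSeg.tgt, γ.isom _ hmem2 _ hmemL, abs_of_nonpos (by linarith)]
      linarith
    have hse : dist (γ.f v) γ.tgt < γ.len / 2 - 2 * r := by
      rw [GeoSeg.tgt, γ.isom _ hv _ hmemL, abs_of_nonpos (by linarith [hv.2])]
      linarith [hv.2]
    have := no_close_aux γ (lam.f b) γ.tgt (γ₂.f t) hq' hme hse (by rw [hcw, hwe, hce]; ring)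
    linarith
  · -- w on λ: done
    exact ⟨w, h3im hw, hwm⟩
  · -- w on [p, γ.src]: impossible
    exfalso
    obtain ⟨t, ⟨ht0, ht1⟩, rfl⟩ := hw
    have hcw : dist (lam.f a) (γ₄.f t) = t := by
      rw [← h4s, GeoSeg.src, γ₄.isom _ ⟨le_refl 0, γ₄.len_nonneg⟩ _ ⟨ht0, ht1⟩,
        abs_of_nonpos (by linarith)]
      ring
    have hwe : dist (γ₄.f t) γ.src = γ₄.len - t := by
      rw [← h4t, GeoSeg.tgt, γ₄.isom _ ⟨ht0, ht1⟩ _ ⟨γ₄.len_nonneg, le_refl _⟩,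
        abs_of_nonpos (by linarith)]
      ring
    have hce : dist (lam.f a) γ.src = γ₄.len := by
      rw [← h4s, ← h4t, GeoSeg.src, GeoSeg.tgt,
        γ₄.isom _ ⟨le_refl 0, γ₄.len_nonneg⟩ _ ⟨γ₄.len_nonneg, le_refl _⟩,
        abs_of_nonpos (by linarith [γ₄.len_nonneg])]
      ring
    have hme : γ.len / 2 ≤ dist γ.mid γ.src := by
      rw [GeoSeg.mid, GeoSeg.src, γ.isom _ hmem2 _ hmem0, abs_of_nonneg (by linarith)]
      linarith
    have hse : dist (γ.f u) γ.src < γ.len / 2 - 2 * r := by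
      rw [GeoSeg.src, γ.isom _ hu _ hmem0, abs_of_nonneg (by linarith [hu.1])]
      linarith [hu.1]
    have := no_close_aux γ (lam.f a) γ.src (γ₄.f t) hp' hme hse (by rw [hcw, hwe, hce]; ring)
    linarith

/-- Let `γ` be an `r`-thin geodesic segment of length at least
`4r + 2` with midpoint `m`. If `p, q` are points on a geodesic `λ` whose closest point
projections `p', q'` to `γ` lie on either side of `m` with `d(m, p') > 2r` and
`d(m, q') > 2r`, then `d(λ, m) ≤ r`. -/
theorem thin_segment_forces_geodesic_close
    {X : Type*} [MetricSpace X] (hX : GeodSpace X) (r : ℝ) (hr : 0 ≤ r)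
    (γ : GeoSeg X) (hlen : 4 * r + 2 ≤ γ.len) (hthin : IsThin r γ)
    (lam : GeoSeg X) (a b : ℝ)
    (ha : a ∈ Set.Icc (0:ℝ) lam.len) (hb : b ∈ Set.Icc (0:ℝ) lam.len)
    (u v : ℝ) (hu : u ∈ Set.Icc (0:ℝ) γ.len) (hv : v ∈ Set.Icc (0:ℝ) γ.len)
    (hp' : γ.f u ∈ ProjSet γ.im (lam.f a)) (hq' : γ.f v ∈ ProjSet γ.im (lam.f b))
    (hbetween : u ≤ γ.len / 2 ∧ γ.len / 2 ≤ v ∨ v ≤ γ.len / 2 ∧ γ.len / 2 ≤ u)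
    (hdu : 2 * r < dist γ.mid (γ.f u)) (hdv : 2 * r < dist γ.mid (γ.f v)) :
    ∃ w ∈ lam.im, dist w γ.mid ≤ r := by
  rcases hbetween with ⟨hu2, hv2⟩ | ⟨hv2, hu2⟩
  · exact key_thin hX r γ hthin lam a b ha hb u v hu hv hp' hq' hu2 hv2 hdu hdv
  · exact key_thin hX r γ hthin lam b a hb ha v u hv hu hq' hp' hv2 hu2 hdv hdu
end
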